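/- Let n₀ ∈ ℕ with n₀ ≥ 1 and let b, c be integers. Define rational polynomials f = 2b − (2b/n₀!)·∏_{j=0}^{n₀−1}(X − j), g = −c + (2c/n₀!)·∏_{j=0}^{n₀−1}(X − j), and h the constant polynomial b. Then f and g take integer values on ℤ, and the sequence defined by a_0 = g(0), a_n = f(n)·a_{n−1} + g(n)·(h(n))^n for n ≥ 1 satisfies a_n = (1 − 2^{n+1})·c·b^n for every n < n₀ and a_n = c·b^n for every n ≥ n₀; in particular, if b·c ≠ 0 then a_n = c·b^n if and only if n ≥ n₀. -/

import Mathlib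

/-!
The polynomial `∏_{j<n₀} (X - j) / n₀!` is the binomial polynomial `binomPoly n₀`, whose value at
any `x` is `Ring.choose x n₀`. So `f = 2b(1 - binomPoly n₀)` and `g = c(2 binomPoly n₀ - 1)` are
integer-valued, and at `n < n₀` (where `binomPoly n₀` vanishes) the recurrence reads
`aₙ = 2b aₙ₋₁ - c bⁿ`, solved by `(1 - 2ⁿ⁺¹) c bⁿ`. At `n₀` we have `f = 0` and `g = c`, so
`a_{n₀} = c b^{n₀}`, and the polynomial identity `c f + b g = bc` makes `aₙ = c bⁿ` persist.
-/

open Polynomial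

/-- The sequence a(f,g,h) over ℚ: a₀ = g(0), aₙ = f(n)·aₙ₋₁ + g(n)·h(n)ⁿ for n ≥ 1. -/
def seqQ (f g h : Polynomial ℚ) : ℕ → ℚ
  | 0 => g.eval 0
  | n + 1 => f.eval ((n : ℚ) + 1) * seqQ f g h n +
      g.eval ((n : ℚ) + 1) * (h.eval ((n : ℚ) + 1)) ^ (n + 1)

open Finset Nat

noncomputable def binomPoly (k : ℕ) : ℚ[X] :=
  C ((k ! : ℚ)⁻¹) * ∏ j ∈ range k, (X - C (j : ℚ))

theorem eval_binomPoly (k : ℕ) (x : ℚ) : (binomPoly k).eval x = Ring.choose x k := by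
  rw [Ring.choose_eq_smul, ← aeval_eq_smeval, ← eval_map_algebraMap, descPochhammer_map,
    descPochhammer_eval_eq_prod_range]
  simp [binomPoly, eval_prod]

theorem eval_binomPoly_intCast (k : ℕ) (m : ℤ) :
    (binomPoly k).eval (m : ℚ) = Ring.choose m k := by
  rw [eval_binomPoly]
  exact (Ring.map_choose (Int.castRingHom ℚ) m k).symm

theorem eval_binomPoly_natCast (k n : ℕ) : (binomPoly k).eval (n : ℚ) = n.choose k := by
  rw [eval_binomPoly, Ring.choose_natCast]

section ConstantH

variable {f g : ℚ[X]} {b c : ℚ} {n₀ : ℕ}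

theorem seqQ_C_succ (f g : ℚ[X]) (b : ℚ) (n : ℕ) :
    seqQ f g (C b) (n + 1) =
      f.eval ((n + 1 : ℕ) : ℚ) * seqQ f g (C b) n + g.eval ((n + 1 : ℕ) : ℚ) * b ^ (n + 1) := by
  simp [seqQ]

theorem seqQ_C_of_lt (hf : ∀ n < n₀, f.eval (n : ℚ) = 2 * b)
    (hg : ∀ n < n₀, g.eval (n : ℚ) = -c) :
    ∀ n < n₀, seqQ f g (C b) n = (1 - 2 ^ (n + 1)) * c * b ^ n
  | 0, h => by
    simp only [seqQ]
    rw [← Nat.cast_zero, hg 0 h]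
    ring
  | n + 1, h => by
    rw [seqQ_C_succ, hf _ h, hg _ h, seqQ_C_of_lt hf hg n (by omega)]
    ring

theorem seqQ_C_of_le (hf₀ : f.eval (n₀ : ℚ) = 0) (hg₀ : g.eval (n₀ : ℚ) = c)
    (hfg : C c * f + C b * g = C (b * c)) {n : ℕ} (hn : n₀ ≤ n) :
    seqQ f g (C b) n = c * b ^ n := by
  induction n, hn using Nat.le_induction with
  | base =>
    cases n₀ with
    | zero => simpa [seqQ] using hg₀
    | succ k => rw [seqQ_C_succ, hf₀, hg₀]; ring
  | succ n _ ih =>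
    have hfg_eval := congrArg (eval ((n + 1 : ℕ) : ℚ)) hfg
    simp only [eval_add, eval_mul, eval_C] at hfg_eval
    rw [seqQ_C_succ, ih]
    linear_combination b ^ n * hfg_eval

end ConstantH

theorem one_sub_two_pow_succ_mul_ne {R : Type*} [CommRing R] [IsDomain R] [CharZero R]
    {b c : R} (hbc : b * c ≠ 0) (n : ℕ) : (1 - 2 ^ (n + 1)) * c * b ^ n ≠ c * b ^ n := by
  intro h
  have h0 : 2 ^ (n + 1) * c * b ^ n = 0 := by linear_combination -h
  simp_all

theorem stmt_16_general (n₀ : ℕ) (b c : ℤ)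
    (f g h : Polynomial ℚ)
    (hf : f = Polynomial.C (2 * (b : ℚ)) -
      Polynomial.C (2 * (b : ℚ) / (n₀.factorial : ℚ)) *
        ∏ j ∈ Finset.range n₀, (Polynomial.X - Polynomial.C (j : ℚ)))
    (hg : g = Polynomial.C (-(c : ℚ)) +
      Polynomial.C (2 * (c : ℚ) / (n₀.factorial : ℚ)) *
        ∏ j ∈ Finset.range n₀, (Polynomial.X - Polynomial.C (j : ℚ)))
    (hh : h = Polynomial.C (b : ℚ)) :
    (∀ m : ℤ, ∃ k : ℤ, f.eval (m : ℚ) = (k : ℚ)) ∧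
    (∀ m : ℤ, ∃ k : ℤ, g.eval (m : ℚ) = (k : ℚ)) ∧
    (∀ n : ℕ, n < n₀ →
      seqQ f g h n = ((1 - 2 ^ (n + 1)) * c * b ^ n : ℤ)) ∧
    (∀ n : ℕ, n₀ ≤ n → seqQ f g h n = ((c * b ^ n : ℤ) : ℚ)) ∧
    (b * c ≠ 0 → ∀ n : ℕ, seqQ f g h n = ((c * b ^ n : ℤ) : ℚ) ↔ n₀ ≤ n) := by
  replace hf : f = 2 * C (b : ℚ) * (1 - binomPoly n₀) := by
    rw [hf, binomPoly, div_eq_mul_inv]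
    simp only [C_mul, C_ofNat]
    ring
  replace hg : g = C (c : ℚ) * (2 * binomPoly n₀ - 1) := by
    rw [hg, binomPoly, div_eq_mul_inv]
    simp only [C_mul, C_neg, C_ofNat]
    ring
  subst hh
  have below : ∀ n < n₀, seqQ f g (C (b : ℚ)) n = (1 - 2 ^ (n + 1)) * c * b ^ n :=
    seqQ_C_of_lt (fun n hn => by simp [hf, eval_binomPoly_natCast, Nat.choose_eq_zero_of_lt hn])
      (fun n hn => by simp [hg, eval_binomPoly_natCast, Nat.choose_eq_zero_of_lt hn])
  have above (n : ℕ) (hn : n₀ ≤ n) : seqQ f g (C (b : ℚ)) n = c * b ^ n :=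
    seqQ_C_of_le (by simp [hf, eval_binomPoly_natCast]) (by norm_num [hg, eval_binomPoly_natCast])
      (by rw [hf, hg, C_mul]; ring) hn
  refine ⟨fun m => ⟨2 * b * (1 - Ring.choose m n₀), by simp [hf, eval_binomPoly_intCast]⟩,
    fun m => ⟨c * (2 * Ring.choose m n₀ - 1), by simp [hg, eval_binomPoly_intCast]⟩,
    fun n hn => by push_cast; exact below n hn, fun n hn => by push_cast; exact above n hn,
    fun hbc n => ⟨fun h => ?_, fun hn => by push_cast; exact above n hn⟩⟩
  by_contra hn
  have hlow := below n (not_le.mp hn)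
  rw [h] at hlow
  exact one_sub_two_pow_succ_mul_ne hbc n (by exact_mod_cast hlow.symm)

theorem stmt_16 (n₀ : ℕ) (hn₀ : 1 ≤ n₀) (b c : ℤ)
    (f g h : Polynomial ℚ)
    (hf : f = Polynomial.C (2 * (b : ℚ)) -
      Polynomial.C (2 * (b : ℚ) / (n₀.factorial : ℚ)) *
        ∏ j ∈ Finset.range n₀, (Polynomial.X - Polynomial.C (j : ℚ)))
    (hg : g = Polynomial.C (-(c : ℚ)) +
      Polynomial.C (2 * (c : ℚ) / (n₀.factorial : ℚ)) *
        ∏ j ∈ Finset.range n₀, (Polynomial.X - Polynomial.C (j : ℚ)))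
    (hh : h = Polynomial.C (b : ℚ)) :
    (∀ m : ℤ, ∃ k : ℤ, f.eval (m : ℚ) = (k : ℚ)) ∧
    (∀ m : ℤ, ∃ k : ℤ, g.eval (m : ℚ) = (k : ℚ)) ∧
    (∀ n : ℕ, n < n₀ →
      seqQ f g h n = ((1 - 2 ^ (n + 1)) * c * b ^ n : ℤ)) ∧
    (∀ n : ℕ, n₀ ≤ n → seqQ f g h n = ((c * b ^ n : ℤ) : ℚ)) ∧
    (b * c ≠ 0 → ∀ n : ℕ, seqQ f g h n = ((c * b ^ n : ℤ) : ℚ) ↔ n₀ ≤ n) :=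
  stmt_16_general n₀ b c f g h hf hg hh
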